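/- arXiv:1610.10085 — 7 statements merged into one kernel-verified Lean document; each statement's English description precedes it below -/
import Mathlib

section
/- In the category of sets and matchings, a morphism σ : S ⇸ T is a monomorphism if and only if σ matches every element of S (i.e., σ is a total injective function). -/
open CategoryTheory

/-- A matching (partial injective function) between `S` and `T`, viewed as a relation. -/
def IsMatching {S T : Type*} (σ : S → T → Prop) : Prop :=
  (∀ s t t', σ s t → σ s t' → t = t') ∧ (∀ s s' t, σ s t → σ s' t → s = s')

/-- Relational composition. -/
def compM {S T U : Type*} (σ : S → T → Prop) (τ : T → U → Prop) : S → U → Prop :=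
  fun s u => ∃ t, σ s t ∧ τ t u

theorem isMatching_id {S : Type*} : IsMatching (Eq : S → S → Prop) :=
  ⟨fun _ _ _ h h' => h.symm.trans h', fun _ _ _ h h' => h.trans h'.symm⟩

theorem isMatching_comp {S T U : Type*} {σ : S → T → Prop} {τ : T → U → Prop}
    (hσ : IsMatching σ) (hτ : IsMatching τ) : IsMatching (compM σ τ) := by
  obtain ⟨h1, h2⟩ := hσ; obtain ⟨g1, g2⟩ := hτ
  constructor
  · rintro s u u' ⟨t, hst, htu⟩ ⟨t', hst', ht'u'⟩
    exact g1 _ _ _ ((h1 _ _ _ hst hst') ▸ htu) ht'u'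
  · rintro s s' u ⟨t, hst, htu⟩ ⟨t', hst', ht'u'⟩
    exact h2 _ _ _ hst ((g2 _ _ _ ht'u' htu) ▸ hst')

/-- Objects of the category `Match` of sets and matchings. -/
structure MatchCat : Type 1 where
  carrier : Type

/-- The category with sets as objects and matchings (partial injective functions) as
morphisms, composed relationally. -/
instance : Category MatchCat where
  Hom S T := {σ : S.carrier → T.carrier → Prop // IsMatching σ}
  id S := ⟨Eq, isMatching_id⟩
  comp f g := ⟨compM f.1 g.1, isMatching_comp f.2 g.2⟩
  id_comp f := by
    apply Subtype.ext; funext s u; apply propext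
    exact ⟨fun ⟨t, h, h'⟩ => h ▸ h', fun h => ⟨s, rfl, h⟩⟩
  comp_id f := by
    apply Subtype.ext; funext s u; apply propext
    exact ⟨fun ⟨t, h, h'⟩ => h' ▸ h, fun h => ⟨u, h, rfl⟩⟩
  assoc f g h := by
    apply Subtype.ext; funext s v; apply propext
    constructor
    · rintro ⟨u, ⟨t, hst, htu⟩, huv⟩; exact ⟨t, hst, u, htu, huv⟩
    · rintro ⟨t, hst, u, htu, huv⟩; exact ⟨u, ⟨t, hst, htu⟩, huv⟩

/-- The zero morphism (empty matching). -/
def zeroM (S T : MatchCat) : S ⟶ T :=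
  ⟨fun _ _ => False, ⟨fun _ _ _ h => h.elim, fun _ _ _ h => h.elim⟩⟩

/-- in the category of sets and matchings, a morphism `σ : S ⇸ T` is a
monomorphism if and only if `σ` matches every element of `S`
(i.e. `σ` is a total injective function). -/
theorem match_mono_iff {S T : MatchCat} (σ : S ⟶ T) :
    Mono σ ↔ ∀ s : S.carrier, ∃ t : T.carrier, σ.1 s t := by
  constructor
  · intro hmono s
    by_contra h
    push_neg at h
    -- α = id, β = id restricted to domain of σ
    let α : S ⟶ S := 𝟙 S
    let β : S ⟶ S := ⟨fun a b => a = b ∧ ∃ t, σ.1 a t,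
      ⟨fun _ _ _ h1 h2 => h1.1.symm.trans h2.1,
       fun _ _ _ h1 h2 => h1.1.trans h2.1.symm⟩⟩
    have hcomp : α ≫ σ = β ≫ σ := by
      apply Subtype.ext; funext a t; apply propext
      constructor
      · rintro ⟨b, hab, hbt⟩
        exact ⟨b, ⟨hab, hab ▸ ⟨t, hbt⟩⟩, hbt⟩
      · rintro ⟨b, ⟨hab, _⟩, hbt⟩
        exact ⟨b, hab, hbt⟩
    have := hmono.right_cancellation α β hcomp
    have : β.1 s s := this ▸ (rfl : α.1 s s)
    exact h _ this.2.choose_spec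
  · intro htot
    constructor
    intro X α β hcomp
    apply Subtype.ext; funext x s; apply propext
    have key : ∀ (γ δ : X ⟶ S), γ ≫ σ = δ ≫ σ → γ.1 x s → δ.1 x s := by
      intro γ δ hγδ hxs
      obtain ⟨t, hst⟩ := htot s
      have h1 : (γ ≫ σ).1 x t := ⟨s, hxs, hst⟩
      rw [hγδ] at h1
      obtain ⟨s', hxs', hs't⟩ := h1
      rwa [σ.2.2 s' s t hs't hst] at hxs'
    exact ⟨key α β hcomp, key β α hcomp.symm⟩
end

section
/- In the category of sets and matchings, a morphism σ : S ⇸ T is an epimorphism if and only if σ matches every element of T (i.e., σ is a coinjection: every element of the target is in the image). -/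
open CategoryTheory

/-- in the category of sets and matchings, a morphism `σ : S ⇸ T` is an
epimorphism if and only if `σ` matches every element of `T` (i.e. `σ` is a coinjection:
every element of the target is in the image). -/
theorem match_epi_iff {S T : MatchCat} (σ : S ⟶ T) :
    Epi σ ↔ ∀ t : T.carrier, ∃ s : S.carrier, σ.1 s t := by
  constructor
  · intro h
    by_contra hc
    push_neg at hc
    obtain ⟨t0, ht0⟩ := hc
    have key : σ ≫ (𝟙 T) = σ ≫ ⟨fun t t' => t = t' ∧ t ≠ t0,
        ⟨fun _ _ _ h h' => h.1.symm.trans h'.1, fun _ _ _ h h' => h.1.trans h'.1.symm⟩⟩ := by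
      apply Subtype.ext; funext s u; apply propext
      constructor
      · rintro ⟨t, hst, ht⟩
        refine ⟨t, hst, ht, ?_⟩
        rintro rfl; exact ht0 s hst
      · rintro ⟨t, hst, ht, _⟩; exact ⟨t, hst, ht⟩
    have := h.left_cancellation _ _ key
    have h2 : (𝟙 T : T ⟶ T).1 t0 t0 := rfl
    rw [this] at h2
    exact h2.2 rfl
  · intro hsurj
    refine ⟨fun {U} α β hab => ?_⟩
    apply Subtype.ext; funext t u; apply propext
    obtain ⟨s, hs⟩ := hsurj t
    have hmem : ∀ γ : T ⟶ U, (compM σ.1 γ.1) s u ↔ γ.1 t u := by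
      intro γ
      constructor
      · rintro ⟨t', hst', ht'u⟩
        rwa [σ.2.1 s t' t hst' hs] at ht'u
      · intro h; exact ⟨t, hs, h⟩
    have : (σ ≫ α).1 s u ↔ (σ ≫ β).1 s u := by rw [hab]
    constructor
    · intro h; exact (hmem β).1 (this.mp ((hmem α).2 h))
    · intro h; exact (hmem α).1 (this.mpr ((hmem β).2 h))
end

section
/- In the category of sets and matchings, the kernel of a morphism σ : S ⇸ T exists and is given by the set K = {s ∈ S | s is unmatched by σ} together with the inclusion matching K ⇸ S; i.e., this inclusion satisfies the universal property of the kernel (the equalizer of σ and the zero morphism). -/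
open CategoryTheory

/-- The inclusion matching of the set of unmatched elements of the source of `σ`. -/
def kerIncl {S T : MatchCat} (σ : S ⟶ T) :
    MatchCat.mk {s : S.carrier // ¬ ∃ t, σ.1 s t} ⟶ S :=
  ⟨fun k s => k.1 = s,
    ⟨fun _ _ _ h h' => h.symm.trans h', fun _ _ _ h h' => Subtype.ext (h.trans h'.symm)⟩⟩

/-! If `α ≫ σ = 0`, every element matched by `α` is unmatched by `σ`. A matching whose image
lies in a subset `P` factors through the inclusion of `P` by restricting its codomain, and the
factorisation is unique because inclusions of subsets are monomorphisms. -/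

namespace MatchCat

@[ext]
theorem hom_ext {S T : MatchCat} {f g : S ⟶ T} (h : ∀ s t, f.1 s t ↔ g.1 s t) : f = g :=
  Subtype.ext <| funext fun s => funext fun t => propext (h s t)

theorem comp_eq_zeroM_iff {S T U : MatchCat} (f : S ⟶ T) (g : T ⟶ U) :
    f ≫ g = zeroM _ _ ↔ ∀ s t, f.1 s t → ∀ u, ¬ g.1 t u := by
  constructor
  · rintro hfg s t hst u htu
    have hsu : (f ≫ g).1 s u := ⟨t, hst, htu⟩
    rwa [hfg] at hsu
  · intro h
    ext s u
    exact ⟨fun ⟨t, hst, htu⟩ => h s t hst u htu, False.elim⟩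

def incl {S : MatchCat} (P : S.carrier → Prop) : mk {s // P s} ⟶ S :=
  ⟨fun k s => k.1 = s,
    ⟨fun _ _ _ h h' => h.symm.trans h', fun _ _ _ h h' => Subtype.ext (h.trans h'.symm)⟩⟩

def codRestrict {A S : MatchCat} (P : S.carrier → Prop) (α : A ⟶ S) : A ⟶ mk {s // P s} :=
  ⟨fun a k => α.1 a k.1,
    ⟨fun a _ _ h h' => Subtype.ext (α.2.1 a _ _ h h'), fun a a' k h h' => α.2.2 a a' k.1 h h'⟩⟩

instance {S : MatchCat} (P : S.carrier → Prop) : Mono (incl P) where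
  right_cancellation β γ hβγ := by
    ext a k
    have hincl : ∀ δ : _ ⟶ mk {s // P s}, (δ ≫ incl P).1 a k.1 ↔ δ.1 a k :=
      fun δ => ⟨fun ⟨k', hk', hk'k⟩ => Subtype.ext hk'k ▸ hk', fun h => ⟨k, h, rfl⟩⟩
    rw [← hincl β, ← hincl γ, hβγ]

theorem codRestrict_comp_incl {A S : MatchCat} {P : S.carrier → Prop} (α : A ⟶ S)
    (hα : ∀ a s, α.1 a s → P s) : codRestrict P α ≫ incl P = α := by
  ext a s
  exact ⟨fun ⟨_, hak, hks⟩ => hks ▸ hak, fun h => ⟨⟨s, hα a s h⟩, h, rfl⟩⟩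

theorem existsUnique_comp_incl_eq {A S : MatchCat} {P : S.carrier → Prop} (α : A ⟶ S)
    (hα : ∀ a s, α.1 a s → P s) : ∃! β : A ⟶ mk {s // P s}, β ≫ incl P = α :=
  ⟨codRestrict P α, codRestrict_comp_incl α hα,
    fun _ hβ => (cancel_mono _).1 (hβ.trans (codRestrict_comp_incl α hα).symm)⟩

end MatchCat

/-- in the category of sets and matchings, the kernel of a morphism
`σ : S ⇸ T` exists and is given by the set `K = {s ∈ S | s is unmatched by σ}` together
with the inclusion matching `K ⇸ S`: this inclusion composes with `σ` to the zero
morphism, and every morphism `α` with `α ≫ σ = 0` factors uniquely through it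
(the universal property of the equalizer of `σ` and the zero morphism). -/
theorem match_kernel {S T : MatchCat} (σ : S ⟶ T) :
    kerIncl σ ≫ σ = zeroM _ _ ∧
    ∀ (A : MatchCat) (α : A ⟶ S), α ≫ σ = zeroM _ _ →
      ∃! α' : A ⟶ MatchCat.mk {s : S.carrier // ¬ ∃ t, σ.1 s t}, α' ≫ kerIncl σ = α := by
  have hker : kerIncl σ = MatchCat.incl _ := rfl
  refine ⟨(MatchCat.comp_eq_zeroM_iff _ _).2 ?_,
    fun A α hα => hker ▸ MatchCat.existsUnique_comp_incl_eq α ?_⟩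
  · rintro k s rfl t hst
    exact k.2 ⟨t, hst⟩
  · rintro a s has ⟨t, hst⟩
    exact (MatchCat.comp_eq_zeroM_iff _ _).1 hα a s has t hst
end

section
/- In the category of sets and matchings, the cokernel of a morphism σ : S ⇸ T exists and is given by the set C = {t ∈ T | t is unmatched by σ} together with the coinjection matching T ⇸ C. -/
open CategoryTheory

/-- The coinjection matching of `T` onto the set of elements unmatched by `σ`. -/
def cokerProj {S T : MatchCat} (σ : S ⟶ T) :
    T ⟶ MatchCat.mk {t : T.carrier // ¬ ∃ s, σ.1 s t} :=
  ⟨fun t c => t = c.1,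
    ⟨fun _ _ _ h h' => Subtype.ext (h.symm.trans h'), fun _ _ _ h h' => h.trans h'.symm⟩⟩

/-- in the category of sets and matchings, the cokernel of a morphism
`σ : S ⇸ T` exists and is given by the set `C = {t ∈ T | t is unmatched by σ}` together
with the coinjection matching `T ⇸ C`: `σ` composes with it to the zero morphism, and it
satisfies the universal property dual to that of the kernel. -/
theorem match_cokernel {S T : MatchCat} (σ : S ⟶ T) :
    σ ≫ cokerProj σ = zeroM _ _ ∧
    ∀ (A : MatchCat) (α : T ⟶ A), σ ≫ α = zeroM _ _ →
      ∃! α' : MatchCat.mk {t : T.carrier // ¬ ∃ s, σ.1 s t} ⟶ A,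
        cokerProj σ ≫ α' = α := by
  constructor
  · apply Subtype.ext; funext s c; apply propext
    constructor
    · rintro ⟨t, hst, ht⟩
      exact absurd ⟨s, ht ▸ hst⟩ c.2
    · exact fun h => h.elim
  · intro A α hα
    refine ⟨⟨fun c a => α.1 c.1 a, ?_⟩, ?_, ?_⟩
    · exact ⟨fun c a a' h h' => α.2.1 _ _ _ h h',
        fun c c' a h h' => Subtype.ext (α.2.2 _ _ _ h h')⟩
    · apply Subtype.ext; funext t a; apply propext
      constructor
      · rintro ⟨c, hc, h⟩; exact hc ▸ h
      · intro h
        have hun : ¬ ∃ s, σ.1 s t := by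
          rintro ⟨s, hs⟩
          have : (σ ≫ α).1 s a := ⟨t, hs, h⟩
          rw [hα] at this; exact this
        exact ⟨⟨t, hun⟩, rfl, h⟩
    · intro β hβ
      apply Subtype.ext; funext c a; apply propext
      have h2 : compM (cokerProj σ).1 β.1 c.1 a = α.1 c.1 a :=
        congrFun (congrFun (congrArg Subtype.val hβ) c.1) a
      constructor
      · intro h
        exact h2 ▸ (⟨c, rfl, h⟩ : compM (cokerProj σ).1 β.1 c.1 a)
      · intro h
        obtain ⟨c', hc', h'⟩ := (h2.symm ▸ h : compM (cokerProj σ).1 β.1 c.1 a)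
        exact (Subtype.ext hc' : c = c') ▸ h'
end

section
/- In the category of sets and matchings, every monomorphism is a kernel of some morphism, and every epimorphism is a cokernel of some morphism. -/
open CategoryTheory

theorem homExt' {S T : MatchCat} {f g : S ⟶ T} (h : ∀ s t, f.1 s t ↔ g.1 s t) : f = g := by
  apply Subtype.ext; funext s t; exact propext (h s t)

theorem mono_total {S T : MatchCat} (σ : S ⟶ T) (hm : Mono σ) :
    ∀ s, ∃ t, σ.1 s t := by
  intro s₀
  by_contra hs
  have hβ : IsMatching (fun s s' : S.carrier => s = s' ∧ s ≠ s₀) :=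
    ⟨fun _ _ _ h h' => h.1.symm.trans h'.1, fun _ _ _ h h' => h.1.trans h'.1.symm⟩
  have h := hm.right_cancellation (⟨_, hβ⟩ : S ⟶ S) (𝟙 S) (by
    apply homExt'
    intro s t
    constructor
    · rintro ⟨s', ⟨rfl, -⟩, h2⟩; exact ⟨s, rfl, h2⟩
    · rintro ⟨s', rfl, h2⟩
      refine ⟨_, ⟨rfl, ?_⟩, h2⟩
      rintro rfl; exact hs ⟨t, h2⟩)
  have h2 := congrFun (congrFun (congrArg Subtype.val h) s₀) s₀
  exact (cast h2.symm rfl).2 rfl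

theorem epi_surj {S T : MatchCat} (σ : S ⟶ T) (hm : Epi σ) :
    ∀ t, ∃ s, σ.1 s t := by
  intro t₀
  by_contra ht
  have hβ : IsMatching (fun t t' : T.carrier => t = t' ∧ t ≠ t₀) :=
    ⟨fun _ _ _ h h' => h.1.symm.trans h'.1, fun _ _ _ h h' => h.1.trans h'.1.symm⟩
  have h := hm.left_cancellation (⟨_, hβ⟩ : T ⟶ T) (𝟙 T) (by
    apply homExt'
    intro s t
    constructor
    · rintro ⟨t', h1, rfl, -⟩; exact ⟨_, h1, rfl⟩
    · rintro ⟨t', h1, rfl⟩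
      refine ⟨_, h1, rfl, ?_⟩
      rintro rfl; exact ht ⟨s, h1⟩)
  have h2 := congrFun (congrFun (congrArg Subtype.val h) t₀) t₀
  exact (cast h2.symm rfl).2 rfl

/-- in the category of sets and matchings, every monomorphism is a kernel of
some morphism, and every epimorphism is a cokernel of some morphism (where the zero
morphism is the empty matching, and the (co)kernel universal property is stated
explicitly). -/
theorem match_mono_is_kernel_and_epi_is_cokernel :
    (∀ (S T : MatchCat) (σ : S ⟶ T), Mono σ →
      ∃ (U : MatchCat) (f : T ⟶ U), σ ≫ f = zeroM S U ∧
        ∀ (A : MatchCat) (α : A ⟶ T), α ≫ f = zeroM A U →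
          ∃! α' : A ⟶ S, α' ≫ σ = α) ∧
    (∀ (S T : MatchCat) (σ : S ⟶ T), Epi σ →
      ∃ (U : MatchCat) (f : U ⟶ S), f ≫ σ = zeroM U T ∧
        ∀ (A : MatchCat) (α : S ⟶ A), f ≫ α = zeroM U A →
          ∃! α' : T ⟶ A, σ ≫ α' = α) := by
  constructor
  · intro S T σ hm
    have htot := mono_total σ hm
    obtain ⟨hfun, hinj⟩ := σ.2
    refine ⟨T, ⟨fun t t' => t = t' ∧ ¬∃ s, σ.1 s t,
      ⟨fun _ _ _ h h' => h.1.symm.trans h'.1, fun _ _ _ h h' => h.1.trans h'.1.symm⟩⟩,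
      ?_, ?_⟩
    · apply homExt'
      intro s u
      simp only [zeroM, iff_false]
      rintro ⟨t, h1, -, h3⟩
      exact h3 ⟨s, h1⟩
    · intro A α hα
      have hkey : ∀ a t, α.1 a t → ∃ s, σ.1 s t := by
        intro a t h1
        by_contra hc
        have h2 := congrFun (congrFun (congrArg Subtype.val hα) a) t
        exact cast h2 ⟨t, h1, rfl, hc⟩
      obtain ⟨afun, ainj⟩ := α.2
      refine ⟨⟨fun a s => ∃ t, α.1 a t ∧ σ.1 s t, ?_, ?_⟩, ?_, ?_⟩
      · rintro a s s' ⟨t, h1, h2⟩ ⟨t', h1', h2'⟩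
        exact hinj _ _ _ h2 ((afun _ _ _ h1' h1) ▸ h2')
      · rintro a a' s ⟨t, h1, h2⟩ ⟨t', h1', h2'⟩
        exact ainj _ _ _ h1 ((hfun _ _ _ h2' h2) ▸ h1')
      · apply homExt'
        intro a t
        constructor
        · rintro ⟨s, ⟨t', h1, h2⟩, h3⟩
          exact (hfun _ _ _ h2 h3) ▸ h1
        · intro h1
          obtain ⟨s, hs⟩ := hkey a t h1
          exact ⟨s, ⟨t, h1, hs⟩, hs⟩
      · intro β hβ
        apply homExt'
        intro a s
        constructor
        · intro h1
          obtain ⟨t, ht⟩ := htot s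
          have hc := congrFun (congrFun (congrArg Subtype.val hβ) a) t
          exact ⟨t, cast hc ⟨s, h1, ht⟩, ht⟩
        · rintro ⟨t, h1, h2⟩
          have hc := congrFun (congrFun (congrArg Subtype.val hβ) a) t
          obtain ⟨s', h3, h4⟩ := cast hc.symm h1
          exact (hinj _ _ _ h2 h4) ▸ h3
  · intro S T σ he
    have hsurj := epi_surj σ he
    obtain ⟨hfun, hinj⟩ := σ.2
    refine ⟨S, ⟨fun s s' => s = s' ∧ ¬∃ t, σ.1 s t,
      ⟨fun _ _ _ h h' => h.1.symm.trans h'.1, fun _ _ _ h h' => h.1.trans h'.1.symm⟩⟩,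
      ?_, ?_⟩
    · apply homExt'
      intro s t
      simp only [zeroM, iff_false]
      rintro ⟨s', ⟨rfl, h3⟩, h1⟩
      exact h3 ⟨t, h1⟩
    · intro A α hα
      have hkey : ∀ s a, α.1 s a → ∃ t, σ.1 s t := by
        intro s a h1
        by_contra hc
        have h2 := congrFun (congrFun (congrArg Subtype.val hα) s) a
        exact cast h2 ⟨s, ⟨rfl, hc⟩, h1⟩
      obtain ⟨afun, ainj⟩ := α.2
      refine ⟨⟨fun t a => ∃ s, σ.1 s t ∧ α.1 s a, ?_, ?_⟩, ?_, ?_⟩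
      · rintro t a a' ⟨s, h1, h2⟩ ⟨s', h1', h2'⟩
        exact afun _ _ _ h2 ((hinj _ _ _ h1' h1) ▸ h2')
      · rintro t t' a ⟨s, h1, h2⟩ ⟨s', h1', h2'⟩
        exact hfun _ _ _ h1 ((ainj _ _ _ h2' h2) ▸ h1')
      · apply homExt'
        intro s a
        constructor
        · rintro ⟨t, h1, s', h2, h3⟩
          exact (hinj _ _ _ h2 h1) ▸ h3
        · intro h1
          obtain ⟨t, ht⟩ := hkey s a h1
          exact ⟨t, ht, s, ht, h1⟩
      · intro β hβ
        apply homExt'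
        intro t a
        constructor
        · intro h1
          obtain ⟨s, hs⟩ := hsurj t
          have hc := congrFun (congrFun (congrArg Subtype.val hβ) s) a
          exact ⟨s, hs, cast hc ⟨t, hs, h1⟩⟩
        · rintro ⟨s, h1, h2⟩
          have hc := congrFun (congrFun (congrArg Subtype.val hβ) s) a
          obtain ⟨t', h3, h4⟩ := cast hc.symm h2
          exact (hfun _ _ _ h1 h3) ▸ h4
end

section
/- The overlap composition of overlap matchings is associative: for overlap matchings σ : B ⇸ C, τ : C ⇸ D, υ : D ⇸ E between barcodes, (υ • τ) • σ = υ • (τ • σ), where • denotes overlap composition. -/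
/-- `I` bounds `J` above: for all `s ∈ J` there exists `t ∈ I` with `s ≤ t`. -/
def BoundsAbove (I J : Set ℝ) : Prop := ∀ s ∈ J, ∃ t ∈ I, s ≤ t

/-- `J` bounds `I` below: for all `t ∈ I` there exists `s ∈ J` with `s ≤ t`. -/
def BoundsBelow (J I : Set ℝ) : Prop := ∀ t ∈ I, ∃ s ∈ J, s ≤ t

/-- `I` overlaps `J` above: `I ∩ J ≠ ∅`, `I` bounds `J` above, and `J` bounds `I` below. -/
def OverlapsAbove (I J : Set ℝ) : Prop :=
  (I ∩ J).Nonempty ∧ BoundsAbove I J ∧ BoundsBelow J I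

/-- A barcode is represented by a family of intervals `b : X → Set ℝ` over an index
set `X`.  `IsBarcode b` asserts that each member is a nonempty interval
(convex subset) of ℝ. -/
def IsBarcode {X : Type*} (b : X → Set ℝ) : Prop :=
  ∀ x, Convex ℝ (b x) ∧ (b x).Nonempty

/-- An overlap matching between barcodes `bC : X → Set ℝ` and `bD : Y → Set ℝ`:
a matching of the index sets such that whenever `x` is matched to `y`, the interval
`bC x` overlaps the interval `bD y` above. -/
def IsOverlapMatching {X Y : Type*} (bC : X → Set ℝ) (bD : Y → Set ℝ)
    (σ : X → Y → Prop) : Prop :=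
  IsMatching σ ∧ ∀ x y, σ x y → OverlapsAbove (bC x) (bD y)

/-- The overlap composition of matchings between barcodes: the relational composition,
restricted to the pairs whose intervals overlap above. -/
def ovComp {X Y Z : Type*} (bB : X → Set ℝ) (bD : Z → Set ℝ)
    (σ : X → Y → Prop) (τ : Y → Z → Prop) : X → Z → Prop :=
  fun x z => (∃ y, σ x y ∧ τ y z) ∧ OverlapsAbove (bB x) (bD z)

lemma boundsAbove_trans {I J K : Set ℝ} (h1 : BoundsAbove I J) (h2 : BoundsAbove J K) :
    BoundsAbove I K := fun s hs => by
  obtain ⟨t, ht, hst⟩ := h2 s hs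
  obtain ⟨u, hu, htu⟩ := h1 t ht
  exact ⟨u, hu, hst.trans htu⟩

lemma boundsBelow_trans {I J K : Set ℝ} (h1 : BoundsBelow K J) (h2 : BoundsBelow J I) :
    BoundsBelow K I := fun t ht => by
  obtain ⟨s, hs, hst⟩ := h2 t ht
  obtain ⟨r, hr, hrs⟩ := h1 s hs
  exact ⟨r, hr, hrs.trans hst⟩

lemma ov_chain13 {I J K L : Set ℝ} (hK : Convex ℝ K)
    (h1 : OverlapsAbove I J) (h2 : OverlapsAbove J K) (h3 : OverlapsAbove K L)
    (h4 : OverlapsAbove I L) : OverlapsAbove I K := by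
  obtain ⟨d, hdI, hdL⟩ := h4.1
  obtain ⟨s, hsK, hsd⟩ := boundsBelow_trans h2.2.2 h1.2.2 d hdI
  obtain ⟨u, huK, hdu⟩ := h3.2.1 d hdL
  exact ⟨⟨d, hdI, hK.ordConnected.out hsK huK ⟨hsd, hdu⟩⟩,
    boundsAbove_trans h1.2.1 h2.2.1, boundsBelow_trans h2.2.2 h1.2.2⟩

lemma ov_chain24 {I J K L : Set ℝ} (hJ : Convex ℝ J) (hL : Convex ℝ L)
    (h1 : OverlapsAbove I J) (h2 : OverlapsAbove J K) (h3 : OverlapsAbove K L)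
    (h4 : OverlapsAbove I L) : OverlapsAbove J L := by
  obtain ⟨b, hbJ, hbK⟩ := h2.1
  obtain ⟨d, hdI, hdL⟩ := h4.1
  refine ⟨?_, boundsAbove_trans h2.2.1 h3.2.1, boundsBelow_trans h3.2.2 h2.2.2⟩
  rcases le_total d b with hdb | hbd
  · obtain ⟨j, hjJ, hjd⟩ := h1.2.2 d hdI
    exact ⟨d, hJ.ordConnected.out hjJ hbJ ⟨hjd, hdb⟩, hdL⟩
  · obtain ⟨l, hlL, hlb⟩ := h3.2.2 b hbK
    exact ⟨b, hbJ, hL.ordConnected.out hlL hdL ⟨hlb, hbd⟩⟩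

/-- overlap composition of overlap matchings between barcodes is
associative: `(υ • τ) • σ = υ • (τ • σ)`. -/
theorem ovComp_assoc {B C D E : Type*}
    (bB : B → Set ℝ) (bC : C → Set ℝ) (bD : D → Set ℝ) (bE : E → Set ℝ)
    (hB : IsBarcode bB) (hC : IsBarcode bC) (hD : IsBarcode bD) (hE : IsBarcode bE)
    (σ : B → C → Prop) (τ : C → D → Prop) (υ : D → E → Prop)
    (hσ : IsOverlapMatching bB bC σ) (hτ : IsOverlapMatching bC bD τ)
    (hυ : IsOverlapMatching bD bE υ) :
    ovComp bB bE (ovComp bB bD σ τ) υ = ovComp bB bE σ (ovComp bC bE τ υ) := by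
  funext x e
  apply propext
  constructor
  · rintro ⟨⟨d, ⟨⟨c, hσc, hτd⟩, hBD⟩, hυe⟩, hBE⟩
    have h1 := hσ.2 _ _ hσc
    have h2 := hτ.2 _ _ hτd
    have h3 := hυ.2 _ _ hυe
    exact ⟨⟨c, hσc, ⟨d, hτd, hυe⟩, ov_chain24 (hC c).1 (hE e).1 h1 h2 h3 hBE⟩, hBE⟩
  · rintro ⟨⟨c, hσc, ⟨d, hτd, hυe⟩, hCE⟩, hBE⟩
    have h1 := hσ.2 _ _ hσc
    have h2 := hτ.2 _ _ hτd
    have h3 := hυ.2 _ _ hυe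
    exact ⟨⟨d, ⟨⟨c, hσc, hτd⟩, ov_chain13 (hD d).1 h1 h2 h3 hBE⟩, hυe⟩, hBE⟩
end

section
/- For an overlap matching of barcodes σ : C ⇸ D and t ∈ ℝ, the restriction E(σ)_t := {(I,J) ∈ σ | t ∈ I ∩ J} defines a natural transformation E(σ) : E(C) → E(D) between the associated functors ℝ → Match; i.e., for all s ≤ t, E(σ)_t ∘ E(C)_{s,t} = E(D)_{s,t} ∘ E(σ)_s as matchings. -/
/-- for an overlap matching `σ` between barcodes `bC` and `bD`, the
restrictions `E(σ)_t = {(x, y) ∈ σ | t ∈ bC x ∩ bD y}` form a natural transformation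
`E(bC) → E(bD)` between the associated functors `ℝ → Match`: for all `s ≤ t`,
`E(σ)_t ∘ E(bC)_{s,t} = E(bD)_{s,t} ∘ E(σ)_s` as matchings. -/
theorem overlap_matching_natural {X Y : Type*} (bC : X → Set ℝ) (bD : Y → Set ℝ)
    (hC : IsBarcode bC) (hD : IsBarcode bD)
    (σ : X → Y → Prop) (hσ : IsOverlapMatching bC bD σ)
    (s t : ℝ) (hst : s ≤ t) :
    compM (fun (p : {x // s ∈ bC x}) (q : {x // t ∈ bC x}) => p.1 = q.1)
          (fun (p : {x // t ∈ bC x}) (q : {y // t ∈ bD y}) => σ p.1 q.1)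
  = compM (fun (p : {x // s ∈ bC x}) (q : {y // s ∈ bD y}) => σ p.1 q.1)
          (fun (p : {y // s ∈ bD y}) (q : {y // t ∈ bD y}) => p.1 = q.1) := by
  funext p q
  simp only [compM, eq_iff_iff]
  constructor
  · rintro ⟨⟨x, hx⟩, rfl, hσxy⟩
    obtain ⟨-, -, hbelow⟩ := hσ.2 _ _ hσxy
    obtain ⟨s', hs'D, hs's⟩ := hbelow s p.2
    have hsD : s ∈ bD q.1 := (hD q.1).1.ordConnected.out hs'D q.2 ⟨hs's, hst⟩
    exact ⟨⟨q.1, hsD⟩, hσxy, rfl⟩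
  · rintro ⟨⟨y, hy⟩, hσxy, rfl⟩
    obtain ⟨-, habove, -⟩ := hσ.2 _ _ hσxy
    obtain ⟨v, hvC, htv⟩ := habove t q.2
    have htC : t ∈ bC p.1 := (hC p.1).1.ordConnected.out p.2 hvC ⟨hst, htv⟩
    exact ⟨⟨p.1, htC⟩, rfl, hσxy⟩
end
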